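/- arXiv:2301.03877 — 5 statements merged into one kernel-verified Lean document; each statement's English description precedes it below -/
import Mathlib

section
/- For every bounded linear operator T on a complex Hilbert space, ‖T‖_α = ‖T*‖_α for all α ∈ [0,1]. -/
variable {H : Type*} [NormedAddCommGroup H] [InnerProductSpace ℂ H] [CompleteSpace H]

/-- The numerical radius of a bounded linear operator. -/
noncomputable def numRad (T : H →L[ℂ] H) : ℝ :=
  sSup {r : ℝ | ∃ x : H, ‖x‖ = 1 ∧ r = ‖(inner ℂ (T x) x : ℂ)‖}

/-- The α-norm of a bounded linear operator. -/
noncomputable def alphaNorm (α : ℝ) (T : H →L[ℂ] H) : ℝ :=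
  sSup {r : ℝ | ∃ x : H, ‖x‖ = 1 ∧
    r = Real.sqrt (α * (‖(inner ℂ (T x) x : ℂ)‖)^2 + (1 - α) * ‖T x‖^2)}

/-- `|T| = (T* T)^(1/2)`. -/
noncomputable def absOp (T : H →L[ℂ] H) : H →L[ℂ] H :=
  CFC.sqrt (ContinuousLinearMap.adjoint T * T)

/-- `|T*| = (T T*)^(1/2)`. -/
noncomputable def absAdj (T : H →L[ℂ] H) : H →L[ℂ] H :=
  CFC.sqrt (T * ContinuousLinearMap.adjoint T)

/-- The real part `(A + A*)/2`. -/
noncomputable def reOp (A : H →L[ℂ] H) : H →L[ℂ] H :=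
  (2:ℝ)⁻¹ • (A + ContinuousLinearMap.adjoint A)

/-- The imaginary part `(A - A*)/(2i)`. -/
noncomputable def imOp (A : H →L[ℂ] H) : H →L[ℂ] H :=
  ((2 * Complex.I)⁻¹ : ℂ) • (A - ContinuousLinearMap.adjoint A)

/-!
Write `q_α(T, x) = α |⟪T x, x⟫|² + (1 - α) ‖T x‖²`, so that `‖T‖_α² = sup q_α(T, ·)` over unit vectors;
it suffices to show `q_α(T, x) ≤ ‖T*‖_α²` for a unit vector `x`. For `α = 1` this is
`|⟪T* x, x⟫| = |⟪T x, x⟫|`. For `α < 1` put `c = 1 - α`, let `a = |⟪T x, x⟫|`, pick `|u| = 1` with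
`ū ⟪T x, x⟫ = a`, and shift `S = u T + r` with `c r = α a`. Then `q_α(T, x) + c r² + α a² = c ‖S x‖²`,
while `c ‖S* y‖² ≤ q_α(T*, y) + c r² + α a²` for every unit `y` (using `2 a b ≤ a² + b²`), and
`‖S x‖ ≤ ‖S‖ = ‖S*‖` closes the argument.
-/

open ContinuousLinearMap Complex Set
open scoped InnerProductSpace ComplexConjugate

theorem Complex.exists_norm_eq_one_conj_mul_eq_norm (z : ℂ) :
    ∃ u : ℂ, ‖u‖ = 1 ∧ conj u * z = ‖z‖ := by
  refine ⟨exp (arg z * I), norm_exp_ofReal_mul_I _, ?_⟩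
  calc conj (exp (arg z * I)) * z = conj (exp (arg z * I)) * (‖z‖ * exp (arg z * I)) := by
        rw [norm_mul_exp_arg_mul_I]
    _ = ‖z‖ * (conj (exp (arg z * I)) * exp (arg z * I)) := by ring
    _ = ‖z‖ := by rw [conj_mul', norm_exp_ofReal_mul_I, ofReal_one, one_pow, mul_one]

section

variable {E : Type*} [NormedAddCommGroup E] [InnerProductSpace ℂ E]
  {α : ℝ} {T : E →L[ℂ] E} {x : E}

noncomputable def alphaQuad (α : ℝ) (T : E →L[ℂ] E) (x : E) : ℝ :=
  α * ‖⟪T x, x⟫_ℂ‖ ^ 2 + (1 - α) * ‖T x‖ ^ 2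

theorem alphaQuad_le_sq_norm_apply (hα : 0 ≤ α) (hx : ‖x‖ = 1) :
    alphaQuad α T x ≤ ‖T x‖ ^ 2 := by
  have h : ‖⟪T x, x⟫_ℂ‖ ^ 2 ≤ ‖T x‖ ^ 2 :=
    pow_le_pow_left₀ (norm_nonneg _) (by simpa [hx] using norm_inner_le_norm (𝕜 := ℂ) (T x) x) 2
  unfold alphaQuad
  nlinarith [mul_le_mul_of_nonneg_left h hα]

theorem bddAbove_alphaNorm_set (hα : 0 ≤ α) (T : E →L[ℂ] E) :
    BddAbove {r : ℝ | ∃ x : E, ‖x‖ = 1 ∧ r = √(alphaQuad α T x)} := by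
  refine ⟨‖T‖, ?_⟩
  rintro _ ⟨x, hx, rfl⟩
  refine Real.sqrt_le_iff.2 ⟨norm_nonneg _, (alphaQuad_le_sq_norm_apply hα hx).trans ?_⟩
  exact pow_le_pow_left₀ (norm_nonneg _) (by simpa [hx] using T.le_opNorm x) 2

theorem alphaQuad_le_sq_alphaNorm (hα : 0 ≤ α) (hx : ‖x‖ = 1) :
    alphaQuad α T x ≤ alphaNorm α T ^ 2 :=
  (Real.sqrt_le_iff.1 (le_csSup (bddAbove_alphaNorm_set hα T) ⟨x, hx, rfl⟩)).2

theorem alphaNorm_nonneg (α : ℝ) (T : E →L[ℂ] E) : 0 ≤ alphaNorm α T :=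
  Real.sSup_nonneg (by rintro _ ⟨x, -, rfl⟩; exact Real.sqrt_nonneg _)

theorem alphaNorm_le_of_forall_alphaQuad_le {M : ℝ} (hM : 0 ≤ M)
    (h : ∀ x : E, ‖x‖ = 1 → alphaQuad α T x ≤ M ^ 2) : alphaNorm α T ≤ M :=
  Real.sSup_le (by rintro _ ⟨x, hx, rfl⟩; exact Real.sqrt_le_iff.2 ⟨hM, h x hx⟩) hM

theorem sq_norm_smul_add_smul_one_apply {u : ℂ} (hu : ‖u‖ = 1) (r : ℝ) (hx : ‖x‖ = 1) :
    ‖(u • T + (r : ℂ) • 1) x‖ ^ 2 = ‖T x‖ ^ 2 + 2 * r * (conj u * ⟪T x, x⟫_ℂ).re + r ^ 2 := by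
  rw [add_apply, smul_apply, smul_apply, one_apply_eq_self, norm_add_sq (𝕜 := ℂ), inner_smul_left,
    inner_smul_right, norm_smul, norm_smul, hu, hx, mul_left_comm, RCLike.re_to_complex,
    re_ofReal_mul, norm_real, Real.norm_eq_abs, mul_one, mul_pow, sq_abs]
  ring

theorem alphaQuad_add_eq {u : ℂ} (hu : ‖u‖ = 1) (hx : ‖x‖ = 1)
    (huz : conj u * ⟪T x, x⟫_ℂ = ‖⟪T x, x⟫_ℂ‖) {r : ℝ} (hr : (1 - α) * r = α * ‖⟪T x, x⟫_ℂ‖) :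
    alphaQuad α T x + (1 - α) * r ^ 2 + α * ‖⟪T x, x⟫_ℂ‖ ^ 2 =
      (1 - α) * ‖(u • T + (r : ℂ) • 1) x‖ ^ 2 := by
  rw [sq_norm_smul_add_smul_one_apply hu r hx, huz, ofReal_re]
  unfold alphaQuad
  linear_combination (-2 * ‖⟪T x, x⟫_ℂ‖) * hr

theorem mul_sq_norm_smul_add_smul_one_apply_le (hα : 0 ≤ α) {u : ℂ} (hu : ‖u‖ = 1) (hx : ‖x‖ = 1)
    {a r : ℝ} (ha : 0 ≤ a) (hr : (1 - α) * r = α * a) :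
    (1 - α) * ‖(u • T + (r : ℂ) • 1) x‖ ^ 2 ≤ alphaQuad α T x + (1 - α) * r ^ 2 + α * a ^ 2 := by
  rw [sq_norm_smul_add_smul_one_apply hu r hx]
  set w := (conj u * ⟪T x, x⟫_ℂ).re
  have hw : w ≤ ‖⟪T x, x⟫_ℂ‖ := (re_le_norm _).trans_eq (by simp [hu])
  have hrw : (1 - α) * (2 * r * w) = 2 * (α * a) * w := by rw [← hr]; ring
  unfold alphaQuad
  nlinarith [mul_le_mul_of_nonneg_left hw (mul_nonneg hα ha),
    mul_nonneg hα (sq_nonneg (a - ‖⟪T x, x⟫_ℂ‖))]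

end

section

variable {E : Type*} [NormedAddCommGroup E] [InnerProductSpace ℂ E] [CompleteSpace E]
  {α : ℝ} {T : E →L[ℂ] E} {x : E}

theorem alphaQuad_one_adjoint : alphaQuad 1 (adjoint T) x = alphaQuad 1 T x := by
  simp [alphaQuad, adjoint_inner_left, norm_inner_symm]

theorem adjoint_smul_add_smul_one (u : ℂ) (r : ℝ) :
    adjoint (u • T + (r : ℂ) • 1) = conj u • adjoint T + (r : ℂ) • 1 := by
  simp [← star_eq_adjoint, star_add, star_smul]

theorem sq_norm_apply_le_of_forall_adjoint {A : E →L[ℂ] E} {K : ℝ}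
    (h : ∀ y : E, ‖y‖ = 1 → ‖adjoint A y‖ ^ 2 ≤ K) (hx : ‖x‖ = 1) : ‖A x‖ ^ 2 ≤ K := by
  have hK : 0 ≤ K := (sq_nonneg _).trans (h x hx)
  have hA : ‖adjoint A‖ ≤ √K := opNorm_le_of_unit_norm (Real.sqrt_nonneg _) fun y hy =>
    (Real.le_sqrt (norm_nonneg _) hK).2 (h y hy)
  refine (Real.le_sqrt (norm_nonneg _) hK).1 ?_
  calc ‖A x‖ ≤ ‖A‖ := by simpa [hx] using A.le_opNorm x
    _ = ‖adjoint A‖ := (adjoint.norm_map A).symm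
    _ ≤ √K := hA

theorem alphaQuad_le_of_forall_alphaQuad_adjoint_le (hα0 : 0 ≤ α) (hα1 : α < 1) {M : ℝ}
    (hM : ∀ y : E, ‖y‖ = 1 → alphaQuad α (adjoint T) y ≤ M ^ 2) (hx : ‖x‖ = 1) :
    alphaQuad α T x ≤ M ^ 2 := by
  set a := ‖⟪T x, x⟫_ℂ‖
  obtain ⟨u, hu, huz⟩ := exists_norm_eq_one_conj_mul_eq_norm ⟪T x, x⟫_ℂ
  have hc : 0 < 1 - α := sub_pos.2 hα1
  set r := α * a / (1 - α)
  have hr : (1 - α) * r = α * a := mul_div_cancel₀ _ hc.ne'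
  have hS : (1 - α) * ‖(u • T + (r : ℂ) • 1) x‖ ^ 2 ≤ M ^ 2 + (1 - α) * r ^ 2 + α * a ^ 2 := by
    rw [← le_div_iff₀' hc]
    refine sq_norm_apply_le_of_forall_adjoint (fun y hy => ?_) hx
    rw [le_div_iff₀' hc, adjoint_smul_add_smul_one]
    have := mul_sq_norm_smul_add_smul_one_apply_le (T := adjoint T) hα0 (by rwa [norm_conj]) hy
      (norm_nonneg _) hr
    linarith [hM y hy]
  linarith [alphaQuad_add_eq hu hx huz hr]

theorem alphaNorm_le_alphaNorm_adjoint (hα : α ∈ Icc 0 1) (T : E →L[ℂ] E) :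
    alphaNorm α T ≤ alphaNorm α (adjoint T) := by
  refine alphaNorm_le_of_forall_alphaQuad_le (alphaNorm_nonneg _ _) fun x hx => ?_
  rcases hα.2.lt_or_eq with hα1 | rfl
  · exact alphaQuad_le_of_forall_alphaQuad_adjoint_le hα.1 hα1
      (fun y hy => alphaQuad_le_sq_alphaNorm hα.1 hy) hx
  · rw [← alphaQuad_one_adjoint]
    exact alphaQuad_le_sq_alphaNorm hα.1 hx

end

theorem alphaNorm_adjoint (T : H →L[ℂ] H) (α : ℝ) (hα : α ∈ Set.Icc (0:ℝ) 1) :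
    alphaNorm α T = alphaNorm α (ContinuousLinearMap.adjoint T) := by
  refine (alphaNorm_le_alphaNorm_adjoint hα T).antisymm ?_
  simpa using alphaNorm_le_alphaNorm_adjoint hα (adjoint T)
end

section
/- Let T be a bounded linear operator on a complex Hilbert space and let f, g : [0,∞) → [0,∞) be continuous functions with f(t)g(t) = t for all t ≥ 0. Then for all α ∈ [0,1], ‖T‖_α² ≤ ‖(α/4)(f⁴(|T|) + g⁴(|T*|)) + (1−α)|T|²‖ + (α/2)‖Re(f²(|T|)g²(|T*|))‖. -/
variable {H : Type*} [NormedAddCommGroup H] [InnerProductSpace ℂ H] [CompleteSpace H]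

/-!
For `ε > 0` put `W = T ψ(|T|)` with `ψ(t) = t g(t) / (t² + ε²)`. Polynomial approximation gives
the intertwining `T h(|T|) = h(|T*|) T`, hence `W W* = (t² ψ²)(|T*|) ≤ g²(|T*|)`, while
`‖T - W f(|T|)‖ ≤ ε`. Thus `|⟨Tx, y⟩| ≤ ‖f(|T|) x‖ ‖W* y‖` up to `ε`, which is the mixed Schwarz
inequality. With `y = x`, `F = f²(|T|)` and `G = g²(|T*|)` selfadjoint,
`4 ⟨Fx, x⟩⟨Gx, x⟩ ≤ ⟨(F + G)x, x⟩² ≤ ⟨(F + G)²x, x⟩ = ⟨(F² + G² + 2 Re(FG))x, x⟩`, and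
`‖Tx‖² = ⟨|T|²x, x⟩`; weighting by `α` and `1 - α` and taking the supremum over unit `x` gives the
bound.
-/

open Polynomial in
theorem exists_polynomial_near_of_continuousOn_isCompact {s : Set ℝ} (hs : IsCompact s)
    {f : ℝ → ℝ} (hf : ContinuousOn f s) {ε : ℝ} (hε : 0 < ε) :
    ∃ p : ℝ[X], ∀ t ∈ s, |p.eval t - f t| < ε := by
  have : CompactSpace s := isCompact_iff_compactSpace.mp hs
  let f' : C(s, ℝ) := ⟨s.domRestrict f, hf.domRestrict⟩
  have hmem : f' ∈ closure (polynomialFunctions s : Set C(s, ℝ)) := by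
    rw [← Subalgebra.topologicalClosure_coe, polynomialFunctions.topologicalClosure]; trivial
  obtain ⟨-, ⟨p, -, rfl⟩, hp⟩ := Metric.mem_closure_iff.mp hmem ε hε
  refine ⟨p, fun t ht => ?_⟩
  have := (ContinuousMap.dist_apply_le_dist (f := f') (g := p.toContinuousMapOnAlgHom s)
    ⟨t, ht⟩).trans_lt hp
  rwa [Real.dist_eq, abs_sub_comm] at this

open Polynomial in
theorem SemiconjBy.aeval {R A : Type*} [CommSemiring R] [Semiring A] [Algebra R A] {x a b : A}
    (h : SemiconjBy x a b) (p : R[X]) : SemiconjBy x (aeval a p) (aeval b p) := by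
  induction p using Polynomial.induction_on' with
  | add p q hp hq => simpa only [map_add] using hp.add_right hq
  | monomial n c =>
    simp only [aeval_monomial]
    exact SemiconjBy.mul_right (Algebra.commute_algebraMap_right c x) (h.pow_right n)

section CStarAlgebra

variable {A : Type*} [CStarAlgebra A]

open Polynomial in
theorem norm_cfc_sub_aeval_le {a : A} (ha : IsSelfAdjoint a) {f : ℝ → ℝ}
    (hf : ContinuousOn f (spectrum ℝ a)) {p : ℝ[X]} {δ : ℝ} (hδ : 0 ≤ δ)
    (hp : ∀ t ∈ spectrum ℝ a, |p.eval t - f t| ≤ δ) :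
    ‖cfc f a - aeval a p‖ ≤ δ := by
  rw [← cfc_polynomial p a, ← cfc_sub f (fun t => p.eval t) a]
  exact norm_cfc_le hδ fun t ht => by rw [Real.norm_eq_abs, abs_sub_comm]; exact hp t ht

theorem SemiconjBy.cfc_real {x a b : A} (h : SemiconjBy x a b) (ha : IsSelfAdjoint a)
    (hb : IsSelfAdjoint b) {f : ℝ → ℝ} (hf : ContinuousOn f (spectrum ℝ a ∪ spectrum ℝ b)) :
    SemiconjBy x (cfc f a) (cfc f b) := by
  refine eq_of_forall_dist_le fun ε hε => ?_
  set δ := ε / (2 * ‖x‖ + 1)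
  have hδ : 0 < δ := by positivity
  obtain ⟨p, hp⟩ := exists_polynomial_near_of_continuousOn_isCompact
    ((ContinuousFunctionalCalculus.isCompact_spectrum a).union
      (ContinuousFunctionalCalculus.isCompact_spectrum b)) hf hδ
  have hpa := norm_cfc_sub_aeval_le ha (hf.mono Set.subset_union_left) hδ.le
    fun t ht => (hp t (Or.inl ht)).le
  have hpb := norm_cfc_sub_aeval_le hb (hf.mono Set.subset_union_right) hδ.le
    fun t ht => (hp t (Or.inr ht)).le
  have hsplit : x * cfc f a - cfc f b * x
      = x * (cfc f a - Polynomial.aeval a p) - (cfc f b - Polynomial.aeval b p) * x := by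
    rw [mul_sub, sub_mul, (h.aeval p).eq]; abel
  calc dist (x * cfc f a) (cfc f b * x)
      ≤ ‖x‖ * ‖cfc f a - Polynomial.aeval a p‖ + ‖cfc f b - Polynomial.aeval b p‖ * ‖x‖ := by
        rw [dist_eq_norm, hsplit]
        exact (norm_sub_le _ _).trans (add_le_add (norm_mul_le _ _) (norm_mul_le _ _))
    _ ≤ ‖x‖ * δ + δ * ‖x‖ := by gcongr
    _ ≤ ε := by
        have : (2 * ‖x‖ + 1) * δ = ε := mul_div_cancel₀ _ (by positivity)
        nlinarith [norm_nonneg x]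

theorem semiconjBy_sqrt_star_mul_self [PartialOrder A] [StarOrderedRing A] (x : A) :
    SemiconjBy x (CFC.sqrt (star x * x)) (CFC.sqrt (x * star x)) := by
  have hx : SemiconjBy x (star x * x) (x * star x) := (mul_assoc x (star x) x).symm
  rw [CFC.sqrt_eq_real_sqrt (star x * x), CFC.sqrt_eq_real_sqrt (x * star x),
    cfcₙ_eq_cfc, cfcₙ_eq_cfc]
  exact hx.cfc_real (star_mul_self_nonneg x).isSelfAdjoint (mul_star_self_nonneg x).isSelfAdjoint
    Real.continuous_sqrt.continuousOn

theorem cfc_pow_four {a : A} (ha : IsSelfAdjoint a) {h : ℝ → ℝ}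
    (hh : ContinuousOn h (spectrum ℝ a)) :
    cfc (fun t => h t ^ 4) a = cfc (fun t => h t ^ 2) a ^ 2 := by
  rw [← cfc_pow (fun t => h t ^ 2) 2 a (hh.pow 2) ha]
  exact cfc_congr fun t _ => by ring

end CStarAlgebra

theorem norm_mul_eq_of_star_mul_self_eq {A : Type*} [NonUnitalNormedRing A] [StarRing A]
    [CStarRing A] {x p : A} (h : star p * p = star x * x) (y : A) : ‖x * y‖ = ‖p * y‖ := by
  have key : ‖x * y‖ * ‖x * y‖ = ‖p * y‖ * ‖p * y‖ := by
    rw [← CStarRing.norm_star_mul_self, ← CStarRing.norm_star_mul_self, star_mul, star_mul,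
      mul_assoc, ← mul_assoc (star x), ← h, mul_assoc, mul_assoc]
  exact (mul_self_inj (norm_nonneg _) (norm_nonneg _)).mp key

open scoped InnerProductSpace
open ContinuousLinearMap RCLike

section InnerProductSpace

variable {𝕜 E : Type*} [RCLike 𝕜] [NormedAddCommGroup E] [InnerProductSpace 𝕜 E]

theorem ContinuousLinearMap.re_inner_le_re_inner_of_le {S R : E →L[𝕜] E} (h : S ≤ R) (x : E) :
    re ⟪S x, x⟫_𝕜 ≤ re ⟪R x, x⟫_𝕜 := by
  have := ((le_def S R).mp h).re_inner_nonneg_left x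
  rwa [sub_apply, inner_sub_left, map_sub, sub_nonneg] at this

theorem ContinuousLinearMap.re_inner_le_opNorm (S : E →L[𝕜] E) {x : E} (hx : ‖x‖ = 1) :
    re ⟪S x, x⟫_𝕜 ≤ ‖S‖ := by
  simpa [hx] using (re_inner_le_norm (S x) x).trans
    (mul_le_mul_of_nonneg_right (S.le_opNorm x) (norm_nonneg x))

theorem ContinuousLinearMap.sq_re_inner_le [CompleteSpace E] {S : E →L[𝕜] E}
    (hS : IsSelfAdjoint S) {x : E} (hx : ‖x‖ = 1) :
    re ⟪S x, x⟫_𝕜 ^ 2 ≤ re ⟪(S ^ 2) x, x⟫_𝕜 := by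
  have h1 : |re ⟪S x, x⟫_𝕜| ≤ ‖S x‖ := by
    simpa [hx] using (abs_re_le_norm _).trans (norm_inner_le_norm (S x) x)
  have h2 : ‖S x‖ ^ 2 = re ⟪(S ^ 2) x, x⟫_𝕜 := by
    rw [apply_norm_sq_eq_inner_adjoint_left, hS.adjoint_eq, sq]; rfl
  rw [← h2]
  exact sq_le_sq' (abs_le.mp h1).1 (abs_le.mp h1).2

theorem ContinuousLinearMap.norm_inner_mul_apply_le [CompleteSpace E] {W U G : E →L[𝕜] E}
    (hW : W * adjoint W ≤ G) (x y : E) : ‖⟪(W * U) x, y⟫_𝕜‖ ≤ ‖U x‖ * √(re ⟪G y, y⟫_𝕜) := by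
  have hWy : ‖adjoint W y‖ ≤ √(re ⟪G y, y⟫_𝕜) := by
    rw [apply_norm_eq_sqrt_inner_adjoint_left, adjoint_adjoint]
    exact Real.sqrt_le_sqrt (re_inner_le_re_inner_of_le hW y)
  calc ‖⟪(W * U) x, y⟫_𝕜‖ = ‖⟪U x, adjoint W y⟫_𝕜‖ := by
        rw [mul_apply_eq_comp, adjoint_inner_right]
    _ ≤ ‖U x‖ * ‖adjoint W y‖ := norm_inner_le_norm _ _
    _ ≤ ‖U x‖ * √(re ⟪G y, y⟫_𝕜) := by gcongr

theorem ContinuousLinearMap.re_inner_mul_re_inner_le [CompleteSpace E] {F G : E →L[𝕜] E}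
    (hF : IsSelfAdjoint F) (hG : IsSelfAdjoint G) {x : E} (hx : ‖x‖ = 1) :
    re ⟪F x, x⟫_𝕜 * re ⟪G x, x⟫_𝕜 ≤
      re ⟪(F ^ 2 + G ^ 2) x, x⟫_𝕜 / 4 + re ⟪(F * G + G * F) x, x⟫_𝕜 / 4 := by
  have hsum : re ⟪(F + G) x, x⟫_𝕜 = re ⟪F x, x⟫_𝕜 + re ⟪G x, x⟫_𝕜 := by
    rw [add_apply, inner_add_left, map_add]
  have hsq : (F + G) ^ 2 = F ^ 2 + G ^ 2 + (F * G + G * F) := by noncomm_ring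
  have h := sq_re_inner_le (hF.add hG) hx
  rw [hsum, hsq, add_apply, inner_add_left, map_add] at h
  nlinarith [sq_nonneg (re ⟪F x, x⟫_𝕜 - re ⟪G x, x⟫_𝕜)]

end InnerProductSpace

theorem ContinuousLinearMap.re_inner_real_smul_left {E : Type*} [NormedAddCommGroup E]
    [InnerProductSpace ℂ E] (r : ℝ) (S : E →L[ℂ] E) (x : E) :
    re ⟪(r • S) x, x⟫_ℂ = r * re ⟪S x, x⟫_ℂ := by
  rw [smul_apply, RCLike.real_smul_eq_coe_smul (K := ℂ), inner_smul_real_left, smul_re]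

theorem alphaNorm_sq_le_of_forall_le {E : Type*} [NormedAddCommGroup E] [InnerProductSpace ℂ E]
    (T : E →L[ℂ] E) {α M : ℝ} (hM : 0 ≤ M)
    (h : ∀ x : E, ‖x‖ = 1 → α * ‖⟪T x, x⟫_ℂ‖ ^ 2 + (1 - α) * ‖T x‖ ^ 2 ≤ M) :
    alphaNorm α T ^ 2 ≤ M := by
  have hle : alphaNorm α T ≤ √M :=
    Real.sSup_le (by rintro r ⟨x, hx, rfl⟩; exact Real.sqrt_le_sqrt (h x hx)) (Real.sqrt_nonneg M)
  have h0 : 0 ≤ alphaNorm α T :=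
    Real.sSup_nonneg (by rintro r ⟨x, -, rfl⟩; exact Real.sqrt_nonneg _)
  calc alphaNorm α T ^ 2 ≤ √M ^ 2 := by gcongr
    _ = M := Real.sq_sqrt hM

theorem reOp_mul {F G : H →L[ℂ] H} (hF : IsSelfAdjoint F) (hG : IsSelfAdjoint G) :
    reOp (F * G) = (2 : ℝ)⁻¹ • (F * G + G * F) := by
  rw [reOp, ← star_eq_adjoint, star_mul, hF.star_eq, hG.star_eq]

theorem absOp_nonneg (T : H →L[ℂ] H) : 0 ≤ absOp T := CFC.sqrt_nonneg _

theorem absAdj_nonneg (T : H →L[ℂ] H) : 0 ≤ absAdj T := CFC.sqrt_nonneg _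

theorem spectrum_absOp_subset (T : H →L[ℂ] H) : spectrum ℝ (absOp T) ⊆ Set.Ici 0 :=
  fun _ ht => spectrum_nonneg_of_nonneg (absOp_nonneg T) ht

theorem spectrum_absAdj_subset (T : H →L[ℂ] H) : spectrum ℝ (absAdj T) ⊆ Set.Ici 0 :=
  fun _ ht => spectrum_nonneg_of_nonneg (absAdj_nonneg T) ht

theorem absOp_sq (T : H →L[ℂ] H) : absOp T ^ 2 = adjoint T * T :=
  CFC.sq_sqrt _ (by simpa only [star_eq_adjoint] using star_mul_self_nonneg T)

theorem absAdj_sq (T : H →L[ℂ] H) : absAdj T ^ 2 = T * adjoint T :=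
  CFC.sq_sqrt _ (by simpa only [star_eq_adjoint] using mul_star_self_nonneg T)

theorem semiconjBy_absOp_absAdj (T : H →L[ℂ] H) : SemiconjBy T (absOp T) (absAdj T) := by
  simpa only [absOp, absAdj, star_eq_adjoint] using semiconjBy_sqrt_star_mul_self T

theorem mul_cfc_absOp (T : H →L[ℂ] H) {h : ℝ → ℝ} (hh : ContinuousOn h (Set.Ici 0)) :
    T * cfc h (absOp T) = cfc h (absAdj T) * T :=
  (semiconjBy_absOp_absAdj T).cfc_real (absOp_nonneg T).isSelfAdjoint
    (absAdj_nonneg T).isSelfAdjoint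
    (hh.mono (Set.union_subset (spectrum_absOp_subset T) (spectrum_absAdj_subset T)))

theorem norm_mul_eq_norm_absOp_mul (T X : H →L[ℂ] H) : ‖T * X‖ = ‖absOp T * X‖ :=
  norm_mul_eq_of_star_mul_self_eq (by
    rw [(absOp_nonneg T).isSelfAdjoint.star_eq, ← sq, absOp_sq, star_eq_adjoint]) X

theorem mul_cfc_absOp_mul_adjoint (T : H →L[ℂ] H) {ψ : ℝ → ℝ}
    (hψ : ContinuousOn ψ (Set.Ici 0)) :
    T * cfc ψ (absOp T) * adjoint (T * cfc ψ (absOp T)) =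
      cfc (fun t => ψ t ^ 2 * t ^ 2) (absAdj T) := by
  have hQ0 := absAdj_nonneg T
  have hψψ : ContinuousOn (fun t => ψ t * ψ t) (Set.Ici 0) := hψ.mul hψ
  rw [← star_eq_adjoint, star_mul, (cfc_predicate ψ (absOp T)).star_eq, star_eq_adjoint,
    mul_assoc, ← mul_assoc (cfc ψ _),
    ← cfc_mul ψ ψ _ (hψ.mono (spectrum_absOp_subset T)) (hψ.mono (spectrum_absOp_subset T)),
    ← mul_assoc, mul_cfc_absOp T hψψ, mul_assoc, ← absAdj_sq, ← cfc_pow_id (R := ℝ) _ 2,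
    ← cfc_mul _ (fun t => t ^ 2) _ (hψψ.mono (spectrum_absAdj_subset T))]
  exact cfc_congr fun t _ => by ring

theorem norm_sub_mul_cfc_absOp_mul_cfc_absOp (T : H →L[ℂ] H) {ψ f : ℝ → ℝ}
    (hψ : ContinuousOn ψ (Set.Ici 0)) (hf : ContinuousOn f (Set.Ici 0)) :
    ‖T - T * cfc ψ (absOp T) * cfc f (absOp T)‖ =
      ‖cfc (fun t => t * (1 - ψ t * f t)) (absOp T)‖ := by
  have hP0 := absOp_nonneg T
  have hP := spectrum_absOp_subset T
  have hk : ContinuousOn (fun t => 1 - ψ t * f t) (Set.Ici 0) :=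
    continuousOn_const.sub (hψ.mul hf)
  have hsub : T - T * cfc ψ (absOp T) * cfc f (absOp T) =
      T * cfc (fun t => 1 - ψ t * f t) (absOp T) := by
    rw [cfc_sub (fun _ => 1) (fun t => ψ t * f t) _ continuousOn_const ((hψ.mul hf).mono hP),
      cfc_const_one ℝ (absOp T), cfc_mul ψ f _ (hψ.mono hP) (hf.mono hP), mul_sub, mul_one,
      mul_assoc]
  rw [hsub, norm_mul_eq_norm_absOp_mul, cfc_mul (fun t => t) _ _ continuousOn_id (hk.mono hP),
    cfc_id' ℝ (absOp T)]

theorem exists_norm_sub_mul_cfc_absOp_le (T : H →L[ℂ] H) {f g : ℝ → ℝ}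
    (hf : ContinuousOn f (Set.Ici 0)) (hg : ContinuousOn g (Set.Ici 0))
    (hfg : ∀ t ≥ (0:ℝ), f t * g t = t) {ε : ℝ} (hε : 0 < ε) :
    ∃ W : H →L[ℂ] H, W * adjoint W ≤ cfc (fun t => g t ^ 2) (absAdj T) ∧
      ‖T - W * cfc f (absOp T)‖ ≤ ε := by
  -- `ψ f = t² / (t² + ε²)`: `ψ` regularises `1 / f`, which need not exist where `f` vanishes
  set ψ : ℝ → ℝ := fun t => t * g t / (t ^ 2 + ε ^ 2)
  have hψ : ContinuousOn ψ (Set.Ici 0) :=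
    (continuousOn_id.mul hg).div (by fun_prop) fun t _ => by positivity
  have hQ := spectrum_absAdj_subset T
  refine ⟨T * cfc ψ (absOp T), ?_, ?_⟩
  · rw [mul_cfc_absOp_mul_adjoint T hψ]
    refine cfc_mono (fun t ht => ?_) (((hψ.pow 2).mul (continuousOn_pow 2)).mono hQ)
      ((hg.pow 2).mono hQ)
    have ht : 0 ≤ t := hQ ht
    have hratio : t ^ 2 / (t ^ 2 + ε ^ 2) ≤ 1 := div_le_one_of_le₀ (by nlinarith) (by positivity)
    calc ψ t ^ 2 * t ^ 2 = g t ^ 2 * (t ^ 2 / (t ^ 2 + ε ^ 2)) ^ 2 := by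
          simp only [ψ]; field_simp
      _ ≤ g t ^ 2 * 1 := by gcongr; exact pow_le_one₀ (by positivity) hratio
      _ = g t ^ 2 := mul_one _
  · rw [norm_sub_mul_cfc_absOp_mul_cfc_absOp T hψ hf]
    refine norm_cfc_le hε.le fun t ht => ?_
    have ht : 0 ≤ t := spectrum_absOp_subset T ht
    have hψf : t * (1 - ψ t * f t) = t * ε ^ 2 / (t ^ 2 + ε ^ 2) := by
      rw [show ψ t * f t = t * (f t * g t) / (t ^ 2 + ε ^ 2) by simp only [ψ]; ring, hfg t ht]
      field_simp
      ring
    rw [Real.norm_eq_abs, hψf, abs_of_nonneg (by positivity), div_le_iff₀ (by positivity)]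
    nlinarith [sq_nonneg (t - ε)]

theorem mixed_schwarz (T : H →L[ℂ] H) {f g : ℝ → ℝ}
    (hf : ContinuousOn f (Set.Ici 0)) (hg : ContinuousOn g (Set.Ici 0))
    (hfg : ∀ t ≥ (0:ℝ), f t * g t = t) (x y : H) :
    ‖⟪T x, y⟫_ℂ‖ ^ 2 ≤
      re ⟪cfc (fun t => f t ^ 2) (absOp T) x, x⟫_ℂ *
        re ⟪cfc (fun t => g t ^ 2) (absAdj T) y, y⟫_ℂ := by
  set F := cfc f (absOp T)
  set rG := re ⟪cfc (fun t => g t ^ 2) (absAdj T) y, y⟫_ℂ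
  have hF : ‖F x‖ ^ 2 = re ⟪cfc (fun t => f t ^ 2) (absOp T) x, x⟫_ℂ := by
    rw [apply_norm_sq_eq_inner_adjoint_left, ← star_eq_adjoint,
      (cfc_predicate f (absOp T)).star_eq,
      cfc_pow f 2 _ (hf.mono (spectrum_absOp_subset T)) (absOp_nonneg T).isSelfAdjoint, sq]
    rfl
  have hrG : 0 ≤ rG := ((nonneg_iff_isPositive _).mp
    (cfc_nonneg fun t _ => sq_nonneg (g t))).re_inner_nonneg_left y
  have key : ‖⟪T x, y⟫_ℂ‖ ≤ ‖F x‖ * √rG := by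
    refine le_of_forall_pos_le_add fun ε hε => ?_
    have hxy : 0 < ‖x‖ * ‖y‖ + 1 := by positivity
    obtain ⟨W, hW, hTW⟩ := exists_norm_sub_mul_cfc_absOp_le T hf hg hfg (div_pos hε hxy)
    have hsplit : T x = (W * F) x + (T - W * F) x := by rw [sub_apply]; abel
    calc ‖⟪T x, y⟫_ℂ‖ ≤ ‖⟪(W * F) x, y⟫_ℂ‖ + ‖⟪(T - W * F) x, y⟫_ℂ‖ := by
          rw [hsplit, inner_add_left]; exact norm_add_le _ _
      _ ≤ ‖F x‖ * √rG + ε / (‖x‖ * ‖y‖ + 1) * ‖x‖ * ‖y‖ := by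
          gcongr
          · exact norm_inner_mul_apply_le hW x y
          · exact (norm_inner_le_norm _ _).trans
              (by gcongr; exact (le_opNorm _ x).trans (by gcongr))
      _ ≤ ‖F x‖ * √rG + ε := by
          rw [mul_assoc, div_mul_eq_mul_div]
          gcongr
          rw [div_le_iff₀ hxy]
          nlinarith
  calc ‖⟪T x, y⟫_ℂ‖ ^ 2 ≤ (‖F x‖ * √rG) ^ 2 := by gcongr
    _ = _ := by rw [mul_pow, hF, Real.sq_sqrt hrG]

theorem alphaNorm_sq_le_kittaneh_general (T : H →L[ℂ] H) (α : ℝ) (hα : α ∈ Set.Icc (0:ℝ) 1)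
    (f g : ℝ → ℝ) (hf : ContinuousOn f (Set.Ici 0)) (hg : ContinuousOn g (Set.Ici 0))
    (hfg : ∀ t ≥ (0:ℝ), f t * g t = t) :
    (alphaNorm α T)^2 ≤
      ‖(α/4) • (cfc (fun t => f t ^ 4) (absOp T) + cfc (fun t => g t ^ 4) (absAdj T)) +
        (1 - α) • (absOp T ^ 2)‖ +
      (α/2) * ‖reOp (cfc (fun t => f t ^ 2) (absOp T) * cfc (fun t => g t ^ 2) (absAdj T))‖ := by
  obtain ⟨hα0, -⟩ := hα
  set F := cfc (fun t => f t ^ 2) (absOp T)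
  set G := cfc (fun t => g t ^ 2) (absAdj T)
  have hF : IsSelfAdjoint F := cfc_predicate _ _
  have hG : IsSelfAdjoint G := cfc_predicate _ _
  rw [cfc_pow_four (absOp_nonneg T).isSelfAdjoint (hf.mono (spectrum_absOp_subset T)),
    cfc_pow_four (absAdj_nonneg T).isSelfAdjoint (hg.mono (spectrum_absAdj_subset T)),
    reOp_mul hF hG]
  refine alphaNorm_sq_le_of_forall_le T (by positivity) fun x hx => ?_
  have hTx : ‖T x‖ ^ 2 = re ⟪(absOp T ^ 2) x, x⟫_ℂ := by
    rw [absOp_sq, apply_norm_sq_eq_inner_adjoint_left]; rfl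
  have hmixed := mixed_schwarz T hf hg hfg x x
  have hkittaneh := re_inner_mul_re_inner_le hF hG hx
  calc α * ‖⟪T x, x⟫_ℂ‖ ^ 2 + (1 - α) * ‖T x‖ ^ 2
      ≤ re ⟪((α/4) • (F ^ 2 + G ^ 2) + (1 - α) • absOp T ^ 2) x, x⟫_ℂ +
          α / 2 * re ⟪((2:ℝ)⁻¹ • (F * G + G * F)) x, x⟫_ℂ := by
        simp only [add_apply, inner_add_left, map_add, re_inner_real_smul_left] at hkittaneh ⊢
        nlinarith
    _ ≤ _ := add_le_add (re_inner_le_opNorm _ hx)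
        (mul_le_mul_of_nonneg_left (re_inner_le_opNorm _ hx) (by positivity))

theorem alphaNorm_sq_le_kittaneh (T : H →L[ℂ] H) (α : ℝ) (hα : α ∈ Set.Icc (0:ℝ) 1)
    (f g : ℝ → ℝ) (hf : ContinuousOn f (Set.Ici 0)) (hg : ContinuousOn g (Set.Ici 0))
    (hf0 : ∀ t ≥ (0:ℝ), 0 ≤ f t) (hg0 : ∀ t ≥ (0:ℝ), 0 ≤ g t)
    (hfg : ∀ t ≥ (0:ℝ), f t * g t = t) :
    (alphaNorm α T)^2 ≤
      ‖(α/4) • (cfc (fun t => f t ^ 4) (absOp T) + cfc (fun t => g t ^ 4) (absAdj T)) +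
        (1 - α) • (absOp T ^ 2)‖ +
      (α/2) * ‖reOp (cfc (fun t => f t ^ 2) (absOp T) * cfc (fun t => g t ^ 2) (absAdj T))‖ :=
  alphaNorm_sq_le_kittaneh_general T α hα f g hf hg hfg
end

section
/- (Buzano's inequality) For all vectors x, y, e in a complex Hilbert space with ‖e‖ = 1, 2|⟨x,e⟩⟨e,y⟩| ≤ ‖x‖‖y‖ + |⟨x,y⟩|. -/
/-!
Reflecting `y` in the line through the unit vector `e` gives `z = 2 ⟪e, y⟫ e - y`, and
`⟪x, z⟫ + ⟪x, y⟫ = 2 ⟪x, e⟫ ⟪e, y⟫`. Since the reflection is an isometry, `‖z‖ = ‖y‖`, so the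
triangle inequality and Cauchy–Schwarz bound `2 ‖⟪x, e⟫ ⟪e, y⟫‖` by `‖x‖ ‖y‖ + ‖⟪x, y⟫‖`.
-/

open Submodule

section Buzano

variable {𝕜 E : Type*} [RCLike 𝕜] [NormedAddCommGroup E] [InnerProductSpace 𝕜 E]

local notation "⟪" x ", " y "⟫" => inner 𝕜 x y

theorem reflection_unit_singleton_apply {v : E} (hv : ‖v‖ = 1) (w : E) :
    (𝕜 ∙ v).reflection w = (2 * ⟪v, w⟫) • v - w := by
  rw [reflection_apply, starProjection_unit_singleton 𝕜 hv, mul_smul, two_smul, two_smul]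

theorem inner_reflection_unit_singleton_add {v : E} (hv : ‖v‖ = 1) (x w : E) :
    ⟪x, (𝕜 ∙ v).reflection w⟫ + ⟪x, w⟫ = 2 * (⟪x, v⟫ * ⟪v, w⟫) := by
  rw [reflection_unit_singleton_apply hv, inner_sub_right, inner_smul_right]
  ring

theorem two_mul_norm_inner_mul_inner_le {e : E} (he : ‖e‖ = 1) (x y : E) :
    2 * ‖⟪x, e⟫ * ⟪e, y⟫‖ ≤ ‖x‖ * ‖y‖ + ‖⟪x, y⟫‖ := by
  set z := (𝕜 ∙ e).reflection y
  have hz : ‖z‖ = ‖y‖ := (𝕜 ∙ e).reflection.norm_map y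
  calc 2 * ‖⟪x, e⟫ * ⟪e, y⟫‖ = ‖⟪x, z⟫ + ⟪x, y⟫‖ := by
        rw [inner_reflection_unit_singleton_add he, norm_mul (2 : 𝕜), RCLike.norm_two]
    _ ≤ ‖⟪x, z⟫‖ + ‖⟪x, y⟫‖ := norm_add_le _ _
    _ ≤ ‖x‖ * ‖y‖ + ‖⟪x, y⟫‖ := by
        grw [norm_inner_le_norm x z, hz]

end Buzano

/-- Buzano's inequality. -/
theorem buzano_inequality {H : Type*} [NormedAddCommGroup H] [InnerProductSpace ℂ H]
    (x y e : H) (he : ‖e‖ = 1) :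
    2 * ‖(inner ℂ x e : ℂ) * (inner ℂ e y : ℂ)‖ ≤
      ‖x‖ * ‖y‖ + ‖(inner ℂ x y : ℂ)‖ :=
  two_mul_norm_inner_mul_inner_le he x y
end

section
/- For every bounded linear operator T on a complex Hilbert space and every α ∈ [0,1], w(T)² ≤ (α/4)w²(|T| + i|T*|) + (α/4)w(|T||T*|) + min{‖(1 − 7α/8)|T*|² + (α/8)|T|²‖, ‖(1 − 7α/8)|T|² + (α/8)|T*|²‖}. -/
variable {H : Type*} [NormedAddCommGroup H] [InnerProductSpace ℂ H] [CompleteSpace H]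

/-!
The mixed Schwarz inequality `|⟪T x, x⟫|² ≤ ⟪|T| x, x⟫ ⟪|T*| x, x⟫` comes from the positivity of
`|R| + R` for the self-adjoint dilation `R = [[0, T*], [T, 0]]` of `T`, whose absolute value is
`diag(|T|, |T*|)`. Write `|⟪T x, x⟫|² = α |⟪T x, x⟫|² + (1 - α) |⟪T x, x⟫|²`. In the first term,
half of `⟪|T| x, x⟫ ⟪|T*| x, x⟫` is at most `|⟪(|T| + i|T*|) x, x⟫|² / 4`, and the other half is
bounded by Buzano's inequality through `‖|T| x‖ ‖|T*| x‖` and `|⟪|T| |T*| x, x⟫|`. The second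
term is at most `(1 - α) ‖|T*| x‖²` (or `(1 - α) ‖|T| x‖²`), and AM-GM on `‖|T| x‖ ‖|T*| x‖`
leaves the quadratic form of `(1 - 7α/8) |T*|² + (α/8) |T|²` (or of its mirror image).
-/

open ContinuousLinearMap
open scoped InnerProductSpace ComplexOrder

section Buzano

variable {𝕜 F : Type*} [RCLike 𝕜] [NormedAddCommGroup F] [InnerProductSpace 𝕜 F]

/-- Buzano's inequality. The reflection of `v` in the line through `e` has the norm of `v`. -/
theorem two_mul_norm_inner_mul_inner_le_s9 {e : F} (he : ‖e‖ = 1) (u v : F) :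
    2 * ‖⟪u, e⟫_𝕜 * ⟪e, v⟫_𝕜‖ ≤ ‖u‖ * ‖v‖ + ‖⟪u, v⟫_𝕜‖ := by
  have hr : ⟪u, (𝕜 ∙ e).reflection v⟫_𝕜 = 2 * (⟪u, e⟫_𝕜 * ⟪e, v⟫_𝕜) - ⟪u, v⟫_𝕜 := by
    rw [Submodule.reflection_apply, Submodule.starProjection_unit_singleton 𝕜 he, inner_sub_right,
      inner_smul_right_eq_smul, inner_smul_right]
    ring
  calc 2 * ‖⟪u, e⟫_𝕜 * ⟪e, v⟫_𝕜‖ = ‖⟪u, (𝕜 ∙ e).reflection v⟫_𝕜 + ⟪u, v⟫_𝕜‖ := by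
        rw [hr, sub_add_cancel, norm_mul (2 : 𝕜), RCLike.norm_two]
    _ ≤ ‖u‖ * ‖v‖ + ‖⟪u, v⟫_𝕜‖ := by
        grw [norm_add_le, norm_inner_le_norm, LinearIsometryEquiv.norm_map]

end Buzano

theorem sq_le_of_schwarz_of_buzano {α m a b p q n₁ n₂ : ℝ} (hα : α ∈ Set.Icc (0:ℝ) 1)
    (hab : m ^ 2 ≤ a * b) (hq : m ^ 2 ≤ q ^ 2) (hn₁ : a ^ 2 + b ^ 2 ≤ n₁ ^ 2)
    (hbuz : 2 * (a * b) ≤ p * q + n₂) :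
    m ^ 2 ≤ α / 4 * n₁ ^ 2 + α / 4 * n₂ + ((1 - 7 * α / 8) * q ^ 2 + α / 8 * p ^ 2) := by
  obtain ⟨hα₀, hα₁⟩ := hα
  nlinarith [mul_le_mul_of_nonneg_left hab hα₀, mul_le_mul_of_nonneg_left hq (sub_nonneg.2 hα₁),
    mul_le_mul_of_nonneg_left hn₁ hα₀, mul_le_mul_of_nonneg_left hbuz hα₀,
    mul_nonneg hα₀ (sq_nonneg (a - b)), mul_nonneg hα₀ (sq_nonneg (p - q))]

section InnerProductSpace

variable {E : Type*} [NormedAddCommGroup E] [InnerProductSpace ℂ E]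

lemma norm_inner_apply_self_le {S : E →L[ℂ] E} {x : E} (hx : ‖x‖ = 1) : ‖⟪S x, x⟫_ℂ‖ ≤ ‖S‖ := by
  grw [norm_inner_le_norm, S.le_opNorm, hx, mul_one, mul_one]

lemma re_inner_apply_self_le {S : E →L[ℂ] E} {x : E} (hx : ‖x‖ = 1) : (⟪S x, x⟫_ℂ).re ≤ ‖S‖ :=
  (Complex.re_le_norm _).trans (norm_inner_apply_self_le hx)

lemma norm_inner_le_numRad (S : E →L[ℂ] E) {x : E} (hx : ‖x‖ = 1) :
    ‖⟪S x, x⟫_ℂ‖ ≤ numRad S :=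
  le_csSup ⟨‖S‖, by rintro r ⟨y, hy, rfl⟩; exact norm_inner_apply_self_le hy⟩ ⟨x, hx, rfl⟩

lemma numRad_nonneg (S : E →L[ℂ] E) : 0 ≤ numRad S :=
  Real.sSup_nonneg (by rintro r ⟨x, -, rfl⟩; positivity)

lemma numRad_sq_le_of_forall {S : E →L[ℂ] E} {M : ℝ} (hM : 0 ≤ M)
    (h : ∀ x : E, ‖x‖ = 1 → ‖⟪S x, x⟫_ℂ‖ ^ 2 ≤ M) : numRad S ^ 2 ≤ M := by
  have : numRad S ≤ √M :=
    Real.sSup_le (by rintro r ⟨x, hx, rfl⟩; exact Real.le_sqrt_of_sq_le (h x hx))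
      (Real.sqrt_nonneg M)
  calc numRad S ^ 2 ≤ √M ^ 2 := by gcongr; exact numRad_nonneg S
    _ = M := Real.sq_sqrt hM

noncomputable def blockDiag (P Q : E →L[ℂ] E) : WithLp 2 (E × E) →L[ℂ] WithLp 2 (E × E) :=
  (WithLp.prodContinuousLinearEquiv 2 ℂ E E).symm.toContinuousLinearMap ∘L
    (P.prodMap Q) ∘L (WithLp.prodContinuousLinearEquiv 2 ℂ E E).toContinuousLinearMap

lemma blockDiag_apply (P Q : E →L[ℂ] E) (z : WithLp 2 (E × E)) :
    blockDiag P Q z = WithLp.toLp 2 (P z.fst, Q z.snd) := rfl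

lemma blockDiag_mul (P Q P' Q' : E →L[ℂ] E) :
    blockDiag P Q * blockDiag P' Q' = blockDiag (P * P') (Q * Q') := rfl

lemma blockDiag_nonneg {P Q : E →L[ℂ] E} (hP : 0 ≤ P) (hQ : 0 ≤ Q) : 0 ≤ blockDiag P Q := by
  rw [nonneg_iff_isPositive] at hP hQ ⊢
  refine (isPositive_iff _).2 ⟨fun z w => ?_, fun z => ?_⟩
  · simp [blockDiag_apply, hP.inner_left_eq_inner_right, hQ.inner_left_eq_inner_right]
  · simpa [blockDiag_apply] using
      add_nonneg (hP.inner_nonneg_left z.fst) (hQ.inner_nonneg_left z.snd)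

end InnerProductSpace

section Hilbert

lemma abs_add_self_nonneg {R : H →L[ℂ] H} (hR : IsSelfAdjoint R) : 0 ≤ CFC.abs R + R := by
  rw [CFC.abs_add_self R]
  exact nsmul_nonneg (CFC.posPart_nonneg R) 2

lemma norm_inner_sq_le_of_nonneg {P : H →L[ℂ] H} (hP : 0 ≤ P) (z w : H) :
    ‖⟪P z, w⟫_ℂ‖ ^ 2 ≤ (⟪P z, z⟫_ℂ).re * (⟪P w, w⟫_ℂ).re := by
  set S := CFC.sqrt P
  have hS : IsSelfAdjoint S := (CFC.sqrt_nonneg P).isSelfAdjoint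
  have hP_eq : ∀ u v, ⟪P u, v⟫_ℂ = ⟪S u, S v⟫_ℂ := fun u v => by
    rw [← CFC.sqrt_mul_sqrt_self P]
    exact hS.isSymmetric (S u) v
  have hre : ∀ u, (⟪P u, u⟫_ℂ).re = ‖S u‖ ^ 2 := fun u => by
    rw [hP_eq, inner_self_eq_norm_sq_to_K]
    norm_cast
  rw [hre, hre, hP_eq, ← mul_pow]
  exact pow_le_pow_left₀ (norm_nonneg _) (norm_inner_le_norm _ _) 2

lemma norm_abs_apply (T : H →L[ℂ] H) (x : H) : ‖CFC.abs T x‖ = ‖T x‖ := by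
  have h : CFC.abs T ∘L CFC.abs T = adjoint T ∘L T := CFC.abs_mul_abs T
  rw [← sq_eq_sq₀ (norm_nonneg _) (norm_nonneg _), apply_norm_sq_eq_inner_adjoint_left,
    apply_norm_sq_eq_inner_adjoint_left, (CFC.abs_nonneg T).isSelfAdjoint.adjoint_eq, h]

lemma inner_apply_self_eq_re {A : H →L[ℂ] H} (hA : IsSelfAdjoint A) (x : H) :
    ⟪A x, x⟫_ℂ = ((⟪A x, x⟫_ℂ).re : ℂ) :=
  (hA.isSymmetric.coe_reApplyInnerSelf_apply x).symm

lemma re_inner_sq_apply_self {A : H →L[ℂ] H} (hA : IsSelfAdjoint A) (x : H) :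
    (⟪(A ^ 2) x, x⟫_ℂ).re = ‖A x‖ ^ 2 := by
  rw [apply_norm_sq_eq_inner_adjoint_left, hA.adjoint_eq, pow_two]
  rfl

lemma re_inner_smul_sq_add_smul_sq {A B : H →L[ℂ] H} (hA : IsSelfAdjoint A)
    (hB : IsSelfAdjoint B) (c d : ℝ) (x : H) :
    (⟪(c • A ^ 2 + d • B ^ 2) x, x⟫_ℂ).re = c * ‖A x‖ ^ 2 + d * ‖B x‖ ^ 2 := by
  simp [← re_inner_sq_apply_self hA, ← re_inner_sq_apply_self hB]

lemma re_inner_sq_add_re_inner_sq_le_numRad_sq {A B : H →L[ℂ] H} (hA : IsSelfAdjoint A)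
    (hB : IsSelfAdjoint B) {x : H} (hx : ‖x‖ = 1) :
    (⟪A x, x⟫_ℂ).re ^ 2 + (⟪B x, x⟫_ℂ).re ^ 2 ≤ numRad (A + Complex.I • B) ^ 2 := by
  have h : ⟪(A + Complex.I • B) x, x⟫_ℂ = ⟨(⟪A x, x⟫_ℂ).re, -(⟪B x, x⟫_ℂ).re⟩ := by
    rw [add_apply, smul_apply, inner_add_left, inner_smul_left, inner_apply_self_eq_re hA,
      inner_apply_self_eq_re hB]
    apply Complex.ext <;> simp
  grw [← norm_inner_le_numRad _ hx, h, Complex.sq_norm, Complex.normSq_mk]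
  ring_nf
  rfl

lemma two_mul_re_inner_mul_re_inner_le {A B : H →L[ℂ] H} (hA : IsSelfAdjoint A)
    (hB : IsSelfAdjoint B) {x : H} (hx : ‖x‖ = 1) :
    2 * ((⟪A x, x⟫_ℂ).re * (⟪B x, x⟫_ℂ).re) ≤ ‖A x‖ * ‖B x‖ + numRad (A * B) := by
  have hprod : ⟪A x, x⟫_ℂ * ⟪x, B x⟫_ℂ = (((⟪A x, x⟫_ℂ).re * (⟪B x, x⟫_ℂ).re : ℝ) : ℂ) := by
    rw [← inner_conj_symm x, inner_apply_self_eq_re hA, inner_apply_self_eq_re hB]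
    simp
  have hAB : ‖⟪A x, B x⟫_ℂ‖ = ‖⟪(A * B) x, x⟫_ℂ‖ := by
    rw [mul_apply_eq_comp, norm_inner_symm]
    exact congrArg norm (hA.isSymmetric (B x) x).symm
  grw [← norm_inner_le_numRad _ hx, ← hAB, ← two_mul_norm_inner_mul_inner_le_s9 hx, hprod,
    Complex.norm_real, Real.norm_eq_abs, ← le_abs_self]

end Hilbert

section Dilation

noncomputable def selfAdjointDilation (T : H →L[ℂ] H) :
    WithLp 2 (H × H) →L[ℂ] WithLp 2 (H × H) :=
  (WithLp.prodContinuousLinearEquiv 2 ℂ H H).symm.toContinuousLinearMap ∘L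
    ((adjoint T ∘L snd ℂ H H).prod (T ∘L fst ℂ H H)) ∘L
    (WithLp.prodContinuousLinearEquiv 2 ℂ H H).toContinuousLinearMap

lemma selfAdjointDilation_apply (T : H →L[ℂ] H) (z : WithLp 2 (H × H)) :
    selfAdjointDilation T z = WithLp.toLp 2 (adjoint T z.snd, T z.fst) := rfl

lemma selfAdjointDilation_mul_self (T : H →L[ℂ] H) :
    selfAdjointDilation T * selfAdjointDilation T = blockDiag (adjoint T * T) (T * adjoint T) :=
  rfl

lemma isSelfAdjoint_selfAdjointDilation (T : H →L[ℂ] H) :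
    IsSelfAdjoint (selfAdjointDilation T) := by
  refine isSelfAdjoint_iff_isSymmetric.2 fun z w => ?_
  simp [selfAdjointDilation_apply, adjoint_inner_left, adjoint_inner_right, add_comm]

lemma absOp_eq_abs (T : H →L[ℂ] H) : absOp T = CFC.abs T := rfl

lemma absAdj_eq_abs (T : H →L[ℂ] H) : absAdj T = CFC.abs (adjoint T) := by
  rw [absAdj, CFC.abs, star_eq_adjoint, adjoint_adjoint]

set_option synthInstance.maxHeartbeats 200000 in
lemma abs_selfAdjointDilation (T : H →L[ℂ] H) :
    CFC.abs (selfAdjointDilation T) = blockDiag (absOp T) (absAdj T) := by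
  refine CFC.sqrt_unique ?_ (blockDiag_nonneg (CFC.abs_nonneg _) (CFC.sqrt_nonneg _))
  rw [blockDiag_mul, absOp_eq_abs, CFC.abs_mul_abs, absAdj_eq_abs, CFC.abs_mul_abs,
    (isSelfAdjoint_selfAdjointDilation T).star_eq, selfAdjointDilation_mul_self, star_eq_adjoint,
    star_eq_adjoint, adjoint_adjoint]

lemma norm_inner_sq_le_absOp_mul_absAdj (T : H →L[ℂ] H) (x y : H) :
    ‖⟪T x, y⟫_ℂ‖ ^ 2 ≤ (⟪absOp T x, x⟫_ℂ).re * (⟪absAdj T y, y⟫_ℂ).re := by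
  have hP := abs_add_self_nonneg (isSelfAdjoint_selfAdjointDilation T)
  have h := norm_inner_sq_le_of_nonneg hP (WithLp.toLp 2 (x, 0)) (WithLp.toLp 2 (0, y))
  simpa [abs_selfAdjointDilation, blockDiag_apply, selfAdjointDilation_apply] using h

end Dilation

theorem numRad_sq_le_buzano (T : H →L[ℂ] H) (α : ℝ) (hα : α ∈ Set.Icc (0:ℝ) 1) :
    (numRad T)^2 ≤
      (α/4) * (numRad (absOp T + Complex.I • absAdj T))^2 +
      (α/4) * numRad (absOp T * absAdj T) +
      min ‖(1 - 7*α/8) • (absAdj T ^ 2) + (α/8) • (absOp T ^ 2)‖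
          ‖(1 - 7*α/8) • (absOp T ^ 2) + (α/8) • (absAdj T ^ 2)‖ := by
  have hA : IsSelfAdjoint (absOp T) := (CFC.abs_nonneg T).isSelfAdjoint
  have hB : IsSelfAdjoint (absAdj T) := (CFC.sqrt_nonneg _).isSelfAdjoint
  refine numRad_sq_le_of_forall ?_ fun x hx => ?_
  · have hα₀ : 0 ≤ α / 4 := by linarith [hα.1]
    exact add_nonneg (add_nonneg (mul_nonneg hα₀ (sq_nonneg _)) (mul_nonneg hα₀ (numRad_nonneg _)))
      (le_min (norm_nonneg _) (norm_nonneg _))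
  have hschwarz := norm_inner_sq_le_absOp_mul_absAdj T x x
  have hn₁ := re_inner_sq_add_re_inner_sq_le_numRad_sq hA hB hx
  have hbuz := two_mul_re_inner_mul_re_inner_le hA hB hx
  have hTA : ‖⟪T x, x⟫_ℂ‖ ^ 2 ≤ ‖absOp T x‖ ^ 2 := by
    rw [absOp_eq_abs, norm_abs_apply]
    gcongr
    simpa [hx] using norm_inner_le_norm (T x) x
  have hTB : ‖⟪T x, x⟫_ℂ‖ ^ 2 ≤ ‖absAdj T x‖ ^ 2 := by
    rw [absAdj_eq_abs, norm_abs_apply, ← adjoint_inner_right]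
    gcongr
    simpa [hx] using norm_inner_le_norm x (adjoint T x)
  rw [← min_add_add_left, le_min_iff]
  constructor
  · grw [← re_inner_apply_self_le hx, re_inner_smul_sq_add_smul_sq hB hA]
    exact sq_le_of_schwarz_of_buzano hα hschwarz hTB hn₁ hbuz
  · grw [← re_inner_apply_self_le hx, re_inner_smul_sq_add_smul_sq hA hB]
    exact sq_le_of_schwarz_of_buzano hα (hschwarz.trans_eq (mul_comm _ _)) hTA
      ((add_comm _ _).trans_le hn₁) (by linarith)
end

section
/- For every bounded linear operator T on a complex Hilbert space, w(T) ≥ (1/√2) max{‖Re(T) + Im(T)‖, ‖Re(T) − Im(T)‖}, where Re(T) = (T + T*)/2 and Im(T) = (T − T*)/(2i). -/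
variable {H : Type*} [NormedAddCommGroup H] [InnerProductSpace ℂ H] [CompleteSpace H]

/-!
Let `z = ⟪T x, x⟫` for a unit vector `x`. The real and imaginary parts `Re T`, `Im T` are
self-adjoint with `re ⟪(Re T) x, x⟫ = re z` and `re ⟪(Im T) x, x⟫ = -im z` (the sign comes from
the inner product being conjugate-linear in its first argument), so the self-adjoint operators
`Re T ± Im T` have quadratic forms `re z ∓ im z`, bounded by `√2 |z| ≤ √2 w(T)`. The norm of a
self-adjoint operator is the supremum of its quadratic form on the unit sphere, hence
`‖Re T ± Im T‖ ≤ √2 w(T)`.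
-/

open ContinuousLinearMap ComplexConjugate
open scoped ComplexStarModule

theorem Complex.abs_re_sub_im_le (z : ℂ) : |z.re - z.im| ≤ √2 * ‖z‖ := by
  rw [← Real.sqrt_sq_eq_abs, Complex.norm_def, ← Real.sqrt_mul zero_le_two, Complex.normSq_apply]
  exact Real.sqrt_le_sqrt (by nlinarith [sq_nonneg (z.re + z.im)])

theorem Complex.abs_re_add_im_le (z : ℂ) : |z.re + z.im| ≤ √2 * ‖z‖ := by
  simpa using Complex.abs_re_sub_im_le (conj z)

section ReApplyInnerSelf

variable {𝕜 E : Type*} [RCLike 𝕜] [NormedAddCommGroup E] [InnerProductSpace 𝕜 E]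

theorem ContinuousLinearMap.reApplyInnerSelf_add (A B : E →L[𝕜] E) (x : E) :
    (A + B).reApplyInnerSelf x = A.reApplyInnerSelf x + B.reApplyInnerSelf x := by
  simp [reApplyInnerSelf_apply, inner_add_left]

theorem ContinuousLinearMap.reApplyInnerSelf_sub (A B : E →L[𝕜] E) (x : E) :
    (A - B).reApplyInnerSelf x = A.reApplyInnerSelf x - B.reApplyInnerSelf x := by
  simp [reApplyInnerSelf_apply, inner_sub_left]

theorem LinearMap.IsSymmetric.opNorm_le_of_abs_reApplyInnerSelf_le {A : E →L[𝕜] E}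
    (hA : (A : E →ₗ[𝕜] E).IsSymmetric) {C : ℝ} (hC : 0 ≤ C)
    (h : ∀ x, ‖x‖ = 1 → |A.reApplyInnerSelf x| ≤ C) : ‖A‖ ≤ C := by
  rw [A.norm_eq_iSup_rayleighQuotient hA]
  refine ciSup_le fun x ↦ ?_
  rcases eq_or_ne x 0 with rfl | hx
  · simpa using hC
  · have hu := norm_smul_inv_norm (𝕜 := 𝕜) hx
    rw [← A.rayleigh_smul x (c := (‖x‖⁻¹ : 𝕜)) (by simpa using hx)]
    simpa [rayleighQuotient, hu] using h _ hu

end ReApplyInnerSelf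

theorem reOp_eq_realPart (A : H →L[ℂ] H) : reOp A = ℜ A := by
  rw [realPart_apply_coe, reOp, star_eq_adjoint]

theorem imOp_eq_imaginaryPart (A : H →L[ℂ] H) : imOp A = ℑ A := by
  rw [imaginaryPart_apply_coe, imOp, star_eq_adjoint, ← Complex.coe_smul, smul_smul]
  congr 1
  simp

theorem isSelfAdjoint_reOp (A : H →L[ℂ] H) : IsSelfAdjoint (reOp A) :=
  reOp_eq_realPart A ▸ (ℜ A).prop

theorem isSelfAdjoint_imOp (A : H →L[ℂ] H) : IsSelfAdjoint (imOp A) :=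
  imOp_eq_imaginaryPart A ▸ (ℑ A).prop

theorem reApplyInnerSelf_reOp (A : H →L[ℂ] H) (x : H) :
    (reOp A).reApplyInnerSelf x = (inner ℂ (A x) x).re := by
  rw [reApplyInnerSelf_apply, reOp, ← Complex.coe_smul, smul_apply, inner_smul_left, add_apply,
    inner_add_left, adjoint_inner_left, ← inner_conj_symm x (A x)]
  simp [-inner_conj_symm]
  ring

theorem reApplyInnerSelf_imOp (A : H →L[ℂ] H) (x : H) :
    (imOp A).reApplyInnerSelf x = -(inner ℂ (A x) x).im := by
  rw [reApplyInnerSelf_apply, imOp, smul_apply, inner_smul_left, sub_apply,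
    inner_sub_left, adjoint_inner_left, ← inner_conj_symm x (A x)]
  simp [-inner_conj_symm]
  ring

omit [CompleteSpace H] in
theorem numRad_nonneg_s14 (T : H →L[ℂ] H) : 0 ≤ numRad T :=
  Real.sSup_nonneg <| by
    rintro _ ⟨x, -, rfl⟩
    exact norm_nonneg _

omit [CompleteSpace H] in
theorem norm_inner_le_numRad_s14 (T : H →L[ℂ] H) {x : H} (hx : ‖x‖ = 1) :
    ‖(inner ℂ (T x) x : ℂ)‖ ≤ numRad T := by
  refine le_csSup ⟨‖T‖, ?_⟩ ⟨x, hx, rfl⟩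
  rintro _ ⟨y, hy, rfl⟩
  calc ‖(inner ℂ (T y) y : ℂ)‖ ≤ ‖T y‖ * ‖y‖ := norm_inner_le_norm _ _
    _ ≤ ‖T‖ * ‖y‖ * ‖y‖ := by gcongr; exact T.le_opNorm y
    _ = ‖T‖ := by simp [hy]

theorem numRad_ge_sum_diff (T : H →L[ℂ] H) :
    numRad T ≥ (Real.sqrt 2)⁻¹ * max ‖reOp T + imOp T‖ ‖reOp T - imOp T‖ := by
  have hC : 0 ≤ √2 * numRad T := mul_nonneg (Real.sqrt_nonneg 2) (numRad_nonneg_s14 T)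
  have h_add : ‖reOp T + imOp T‖ ≤ √2 * numRad T := by
    refine ((isSelfAdjoint_reOp T).add (isSelfAdjoint_imOp T)).isSymmetric
      |>.opNorm_le_of_abs_reApplyInnerSelf_le hC fun x hx ↦ ?_
    rw [reApplyInnerSelf_add, reApplyInnerSelf_reOp, reApplyInnerSelf_imOp, ← sub_eq_add_neg]
    exact (Complex.abs_re_sub_im_le _).trans (by gcongr; exact norm_inner_le_numRad_s14 T hx)
  have h_sub : ‖reOp T - imOp T‖ ≤ √2 * numRad T := by
    refine ((isSelfAdjoint_reOp T).sub (isSelfAdjoint_imOp T)).isSymmetric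
      |>.opNorm_le_of_abs_reApplyInnerSelf_le hC fun x hx ↦ ?_
    rw [reApplyInnerSelf_sub, reApplyInnerSelf_reOp, reApplyInnerSelf_imOp, sub_neg_eq_add]
    exact (Complex.abs_re_add_im_le _).trans (by gcongr; exact norm_inner_le_numRad_s14 T hx)
  rw [ge_iff_le, inv_mul_le_iff₀ (by positivity)]
  exact max_le h_add h_sub
end
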